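/- arXiv:2604.04111 — 5 statements merged into one kernel-verified Lean document; each statement's English description precedes it below -/
import Mathlib

section
/- For every integer q ≥ 2, the Zarankiewicz number satisfies z(binom(q+1,2), q+1) = q(q+1). -/
open Finset

/-- A bipartite graph on `α × β` (a set of cells, called 1-edges) is `C₄`-free if no two
distinct rows share two distinct columns. -/
def C4Free {α β : Type*} (E1 : Finset (α × β)) : Prop :=
  ∀ i k : α, ∀ j l : β, i ≠ k → j ≠ l →
    (i, j) ∈ E1 → (i, l) ∈ E1 → (k, j) ∈ E1 → (k, l) ∈ E1 → False

/-- A 2-edge `(i,j;k,l)`: a pair of cells, its two halves `(i,j)` and `(k,l)`. -/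
abbrev TwoEdge (α β : Type*) := (α × β) × (α × β)

/-- A 2-edge `(i,j;k,l)` is nondegenerate if `i ≠ k` and `j ≠ l`. -/
def Nondeg {α β : Type*} (e : TwoEdge α β) : Prop :=
  e.1.1 ≠ e.2.1 ∧ e.1.2 ≠ e.2.2

/-- The simplicity condition: the halves of the 2-edges in `E2` are pairwise distinct
cells, none of which lies in `E1`. -/
def Simple {α β : Type*} (E1 : Finset (α × β)) (E2 : Finset (TwoEdge α β)) : Prop :=
  (∀ e ∈ E2, e.1 ≠ e.2) ∧
  (∀ e ∈ E2, e.1 ∉ E1 ∧ e.2 ∉ E1) ∧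
  (∀ e ∈ E2, ∀ f ∈ E2, e ≠ f →
    e.1 ≠ f.1 ∧ e.1 ≠ f.2 ∧ e.2 ≠ f.1 ∧ e.2 ≠ f.2)

/-- A cell is occupied if it lies in `E1` or is a half of some 2-edge in `E2`. -/
def Occupied {α β : Type*} (E1 : Finset (α × β)) (E2 : Finset (TwoEdge α β))
    (c : α × β) : Prop :=
  c ∈ E1 ∨ ∃ e ∈ E2, e.1 = c ∨ e.2 = c

/-- `(E1, E2)` contains a generalized `C₄`-cycle:
(1) a classical `C₄` among 1-edges; or
(2) a nondegenerate 2-edge `(i,j;k,l) ∈ E2` with both opposite cells `(i,l)`, `(k,j)` occupied; or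
(3) a 2-edge `(i,j;p,q) ∈ E2` and a cell `(k,l)` with `k ∉ {i,p}`, `l ∉ {j,q}` such that the
five cells `(k,l), (k,j), (k,q), (i,l), (p,l)` are all occupied, these five cells being
pairwise distinct in case the 2-edge is nondegenerate. -/
def HasGenC4 {α β : Type*} (E1 : Finset (α × β)) (E2 : Finset (TwoEdge α β)) : Prop :=
  (∃ i k : α, ∃ j l : β, i ≠ k ∧ j ≠ l ∧
      (i, j) ∈ E1 ∧ (i, l) ∈ E1 ∧ (k, j) ∈ E1 ∧ (k, l) ∈ E1) ∨
  (∃ e ∈ E2, Nondeg e ∧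
      Occupied E1 E2 (e.1.1, e.2.2) ∧ Occupied E1 E2 (e.2.1, e.1.2)) ∨
  (∃ e ∈ E2, ∃ k : α, ∃ l : β,
      k ≠ e.1.1 ∧ k ≠ e.2.1 ∧ l ≠ e.1.2 ∧ l ≠ e.2.2 ∧
      Occupied E1 E2 (k, l) ∧ Occupied E1 E2 (k, e.1.2) ∧ Occupied E1 E2 (k, e.2.2) ∧
      Occupied E1 E2 (e.1.1, l) ∧ Occupied E1 E2 (e.2.1, l) ∧
      (Nondeg e →
        [(k, l), (k, e.1.2), (k, e.2.2), (e.1.1, l), (e.2.1, l)].Pairwise (· ≠ ·)))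

/-- The Zarankiewicz number `z(m,n)`: the maximum number of cells of a `C₄`-free bipartite
graph on `[m] × [n]`. -/
noncomputable def zar (m n : ℕ) : ℕ :=
  sSup {k | ∃ E1 : Finset (Fin m × Fin n), C4Free E1 ∧ E1.card = k}

/-- An admissible limited augmented bipartite graph on `[m] × [n]`: `E1` is `C₄`-free with
`|E1| = z(m,n)`, the simplicity condition holds, and there is no generalized `C₄`-cycle. -/
def Admissible {m n : ℕ} (E1 : Finset (Fin m × Fin n))
    (E2 : Finset (TwoEdge (Fin m) (Fin n))) : Prop :=
  C4Free E1 ∧ E1.card = zar m n ∧ Simple E1 E2 ∧ ¬ HasGenC4 E1 E2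

/-- The limited augmented Zarankiewicz number `z_L(m,n)`: the maximum of `|E1| + |E2|`
over all admissible limited augmented bipartite graphs on `[m] × [n]`. -/
noncomputable def zL (m n : ℕ) : ℕ :=
  sSup {k | ∃ (E1 : Finset (Fin m × Fin n)) (E2 : Finset (TwoEdge (Fin m) (Fin n))),
    Admissible E1 E2 ∧ E1.card + E2.card = k}

/-!
A `C₄`-free graph meets every pair of distinct columns in at most one row, so a row with
`d` cells uses `C(d,2)` of the `C(n,2)` column pairs exclusively; since `d ≤ 1 + C(d,2)`,
an `m × n` graph has at most `m + C(n,2)` cells. For `m = C(n,2)` this bound is attained by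
letting the rows be the distinct `2`-subsets of the columns.
-/

section

variable {α β : Type*} [Fintype α] [Fintype β] [DecidableEq β]

def incidence (f : α → Finset β) : Finset (α × β) := {c | c.2 ∈ f c.1}

lemma c4Free_incidence {f : α → Finset β} (hf : Function.Injective f)
    (hcard : ∀ i, #(f i) = 2) : C4Free (incidence f) := by
  intro i k j l hik hjl hij hil hkj hkl
  simp only [incidence, mem_filter, mem_univ, true_and] at hij hil hkj hkl
  have hpair : ∀ {a}, j ∈ f a → l ∈ f a → f a = {j, l} := fun hj hl =>
    (eq_of_subset_of_card_le (insert_subset_iff.2 ⟨hj, singleton_subset_iff.2 hl⟩)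
      (by rw [hcard, card_pair hjl])).symm
  exact hik (hf ((hpair hij hil).trans (hpair hkj hkl).symm))

variable [DecidableEq α]

def row (E : Finset (α × β)) (i : α) : Finset β := {j | (i, j) ∈ E}

lemma card_eq_sum_card_row (E : Finset (α × β)) : #E = ∑ i, #(row E i) := by
  simp only [row, card_filter]
  rw [← Fintype.sum_prod_type' (fun i j => if (i, j) ∈ E then 1 else 0)]
  simp

lemma C4Free.pairwiseDisjoint_powersetCard_row {E : Finset (α × β)} (h : C4Free E) :
    ((univ : Finset α) : Set α).PairwiseDisjoint fun i => (row E i).powersetCard 2 := by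
  intro i _ k _ hik
  refine disjoint_left.2 fun s hi hk => ?_
  obtain ⟨j, l, hjl, rfl⟩ := card_eq_two.1 (mem_powersetCard.1 hi).2
  simp only [mem_powersetCard, insert_subset_iff, singleton_subset_iff, row, mem_filter,
    mem_univ, true_and] at hi hk
  exact h i k j l hik hjl hi.1.1 hi.1.2 hk.1.1 hk.1.2

lemma C4Free.sum_choose_two_card_row_le {E : Finset (α × β)} (h : C4Free E) :
    ∑ i, (#(row E i)).choose 2 ≤ (Fintype.card β).choose 2 :=
  calc ∑ i, (#(row E i)).choose 2 = #(univ.biUnion fun i => (row E i).powersetCard 2) := by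
        simp only [card_biUnion h.pairwiseDisjoint_powersetCard_row, card_powersetCard]
    _ ≤ #((univ : Finset β).powersetCard 2) :=
        card_le_card <| biUnion_subset.2 fun _ _ => powersetCard_mono (subset_univ _)
    _ = (Fintype.card β).choose 2 := by rw [card_powersetCard, card_univ]

lemma le_one_add_choose_two (d : ℕ) : d ≤ 1 + d.choose 2 := by
  cases d with
  | zero => simp
  | succ k => rw [Nat.choose_succ_succ, Nat.choose_one_right]; omega

lemma C4Free.card_le {E : Finset (α × β)} (h : C4Free E) :
    #E ≤ Fintype.card α + (Fintype.card β).choose 2 :=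
  calc #E = ∑ i, #(row E i) := card_eq_sum_card_row E
    _ ≤ ∑ i, (1 + (#(row E i)).choose 2) := sum_le_sum fun i _ => le_one_add_choose_two _
    _ ≤ Fintype.card α + (Fintype.card β).choose 2 := by
      rw [sum_add_distrib, sum_const, card_univ, smul_eq_mul, mul_one]
      exact Nat.add_le_add_left h.sum_choose_two_card_row_le _

lemma row_incidence (f : α → Finset β) (i : α) : row (incidence f) i = f i := by
  ext
  simp [row, incidence]

lemma exists_c4Free_card_eq_two_mul (h : Fintype.card α ≤ (Fintype.card β).choose 2) :
    ∃ E : Finset (α × β), C4Free E ∧ #E = 2 * Fintype.card α := by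
  obtain ⟨f⟩ := Function.Embedding.nonempty_of_card_le
    (h.trans_eq (Fintype.card_finset_len (α := β) 2).symm)
  refine ⟨incidence fun i => (f i).1, c4Free_incidence (Subtype.val_injective.comp f.injective)
    fun i => (f i).2, ?_⟩
  simp [card_eq_sum_card_row, row_incidence, (f _).2, mul_comm]

end

lemma zar_eq {m n k : ℕ} (hle : ∀ E : Finset (Fin m × Fin n), C4Free E → #E ≤ k)
    (hex : ∃ E : Finset (Fin m × Fin n), C4Free E ∧ #E = k) : zar m n = k :=
  IsGreatest.csSup_eq ⟨hex, by rintro _ ⟨E, hE, rfl⟩; exact hle E hE⟩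

theorem zar_choose_general (q : ℕ) :
    zar (Nat.choose (q + 1) 2) (q + 1) = q * (q + 1) := by
  have hchoose : q * (q + 1) = 2 * (q + 1).choose 2 := by
    rw [Nat.choose_two_right, Nat.mul_div_cancel' (Nat.even_mul_pred_self _).two_dvd]
    simp [mul_comm]
  refine zar_eq (fun E hE => ?_) ?_
  · simpa [hchoose, two_mul] using hE.card_le
  · simpa [hchoose] using exists_c4Free_card_eq_two_mul (α := Fin ((q + 1).choose 2))
      (β := Fin (q + 1)) (by simp)

/-- For every integer `q ≥ 2`, `z(binom(q+1,2), q+1) = q(q+1)`. -/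
theorem zar_choose (q : ℕ) (hq : 2 ≤ q) :
    zar (Nat.choose (q + 1) 2) (q + 1) = q * (q + 1) :=
  zar_choose_general q
end

section
/- Let t ≥ 1 be an integer. Label the right vertex set T as the set of pairs (i,k) with i ∈ [t] and k ∈ ℤ/4ℤ, let the left vertex set S be the 2-element subsets of T, and let E1 = {(e,v) : e ∈ S, v ∈ e} be the incidence graph of K_{4t}. Let E2 consist of: (a) for each i ∈ [t], the two within-block 2-edges ({(i,0),(i,1)}, (i,2); {(i,0),(i,2)}, (i,3)) and ({(i,1),(i,3)}, (i,0); {(i,2),(i,3)}, (i,1)); and (b) for each ordered pair of distinct indices i ≠ j in [t] and each k ∈ ℤ/4ℤ, the cross-block 2-edge ({(i,k),(j,k+1)}, (j,k+2); {(i,k+1),(j,k+2)}, (i,k+3)). Then E2 has exactly 4t² − 2t elements, and (E1,E2) satisfies the simplicity condition and contains no generalized C4-cycle. -/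
open Finset

/-- The right vertex set: pairs `(i,k)` with `i ∈ [t]` and `k ∈ ℤ/4ℤ`. -/
abbrev BVert (t : ℕ) := Fin t × ZMod 4

/-- The left vertex set: 2-element subsets of the right vertex set. -/
abbrev BEdges (t : ℕ) := {e : Finset (BVert t) // e.card = 2}

instance (t : ℕ) : DecidableEq (BEdges t) := inferInstance

/-- The incidence bipartite graph of `K_{4t}` with blocks labelled by `ℤ/4ℤ`. -/
def IncB (t : ℕ) : Finset (BEdges t × BVert t) :=
  Finset.univ.filter fun p => p.2 ∈ p.1.val

/-- The 2-element subset `{a, b}` as a left vertex. -/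
def prB {t : ℕ} (a b : BVert t) (h : a ≠ b) : BEdges t :=
  ⟨{a, b}, Finset.card_pair h⟩

/-- Two vertices with distinct `ℤ/4ℤ`-labels are distinct. -/
lemma BVert.snd_ne {t : ℕ} {i j : Fin t} {c d : ZMod 4} (h : c ≠ d) :
    (i, c) ≠ ((j, d) : BVert t) :=
  fun hEq => h (congrArg Prod.snd hEq)

lemma zmod4_ne_add_one : ∀ k : ZMod 4, k ≠ k + 1 := by decide

lemma zmod4_add_one_ne_add_two : ∀ k : ZMod 4, k + 1 ≠ k + 2 := by decide

/-- The within-block 2-edge `({(i,0),(i,1)}, (i,2); {(i,0),(i,2)}, (i,3))`. -/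
def wB1 {t : ℕ} (i : Fin t) : TwoEdge (BEdges t) (BVert t) :=
  ((prB (i, 0) (i, 1) (BVert.snd_ne (by decide)), (i, 2)),
   (prB (i, 0) (i, 2) (BVert.snd_ne (by decide)), (i, 3)))

/-- The within-block 2-edge `({(i,1),(i,3)}, (i,0); {(i,2),(i,3)}, (i,1))`. -/
def wB2 {t : ℕ} (i : Fin t) : TwoEdge (BEdges t) (BVert t) :=
  ((prB (i, 1) (i, 3) (BVert.snd_ne (by decide)), (i, 0)),
   (prB (i, 2) (i, 3) (BVert.snd_ne (by decide)), (i, 1)))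

/-- The cross-block 2-edge
`({(i,k),(j,k+1)}, (j,k+2); {(i,k+1),(j,k+2)}, (i,k+3))`. -/
def cB {t : ℕ} (i j : Fin t) (k : ZMod 4) : TwoEdge (BEdges t) (BVert t) :=
  ((prB (i, k) (j, k + 1) (BVert.snd_ne (zmod4_ne_add_one k)), (j, k + 2)),
   (prB (i, k + 1) (j, k + 2) (BVert.snd_ne (zmod4_add_one_ne_add_two k)), (i, k + 3)))

/-- The full set of 2-edges: the `2t` within-block 2-edges together with the
cross-block 2-edges `cB i j k` for all ordered pairs `i ≠ j` and all `k ∈ ℤ/4ℤ`. -/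
def E2B (t : ℕ) : Finset (TwoEdge (BEdges t) (BVert t)) :=
  (Finset.univ.biUnion fun i : Fin t => {wB1 i, wB2 i}) ∪
    ((Finset.univ.filter fun p : (Fin t × Fin t) × ZMod 4 => p.1.1 ≠ p.1.2).image
      fun p => cB p.1.1 p.1.2 p.2)

section Helpers

variable {t : ℕ}

lemma fpair_eq {α : Type*} [DecidableEq α] {a b c d : α} :
    ({a, b} : Finset α) = {c, d} ↔ (a = c ∧ b = d) ∨ (a = d ∧ b = c) := by
  rw [← Finset.coe_inj]
  simp only [Finset.coe_insert, Finset.coe_singleton]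
  exact Set.pair_eq_pair_iff

lemma prB_eq {a b c d : BVert t} {h1 : a ≠ b} {h2 : c ≠ d} :
    prB a b h1 = prB c d h2 ↔ (a = c ∧ b = d) ∨ (a = d ∧ b = c) := by
  rw [Subtype.ext_iff]; exact fpair_eq

lemma prB_val {a b : BVert t} {h : a ≠ b} : (prB a b h).val = {a, b} := rfl

lemma val_eq_prB {f : BEdges t} {a b : BVert t} {h : a ≠ b} :
    f = prB a b h ↔ f.val = {a, b} := Subtype.ext_iff

lemma mem_IncB {f : BEdges t} {v : BVert t} : (f, v) ∈ IncB t ↔ v ∈ f.val := by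
  simp [IncB]

lemma mem_E2B {e : TwoEdge (BEdges t) (BVert t)} :
    e ∈ E2B t ↔ (∃ i, e = wB1 i ∨ e = wB2 i) ∨
      ∃ i j k, i ≠ j ∧ e = cB i j k := by
  simp only [E2B, Finset.mem_union, Finset.mem_biUnion, Finset.mem_univ, true_and,
    Finset.mem_insert, Finset.mem_singleton, Finset.mem_image, Finset.mem_filter]
  constructor
  · rintro (⟨i, h⟩ | ⟨p, hp, rfl⟩)
    · exact Or.inl ⟨i, h⟩
    · exact Or.inr ⟨p.1.1, p.1.2, p.2, hp, rfl⟩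
  · rintro (⟨i, h⟩ | ⟨i, j, k, hij, rfl⟩)
    · exact Or.inl ⟨i, h⟩
    · exact Or.inr ⟨((i, j), k), hij, rfl⟩

lemma pair_mem_eq {f : BEdges t} {a b : BVert t} (ha : a ∈ f.val) (hb : b ∈ f.val)
    (hab : a ≠ b) : f.val = {a, b} := by
  refine (Finset.eq_of_subset_of_card_le ?_ ?_).symm
  · intro x hx
    rcases Finset.mem_insert.mp hx with rfl | hx
    · exact ha
    · rwa [Finset.mem_singleton.mp hx]
  · rw [f.2, Finset.card_pair hab]

/-- Analysis of equality between two "cross-form" pairs. -/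
lemma crossPair_eq {a b a' b' : Fin t} {m n m' n' : ZMod 4} (hn : n = m + 1)
    (hn' : n' = m' + 1)
    (h : ({((a, m) : BVert t), (b, n)} : Finset (BVert t)) = {(a', m'), (b', n')}) :
    a = a' ∧ b = b' ∧ m = m' := by
  rcases fpair_eq.mp h with ⟨u1, u2⟩ | ⟨u1, u2⟩ <;> simp only [Prod.mk.injEq] at u1 u2
  · exact ⟨u1.1, u2.1, u1.2⟩
  · exfalso
    have : m = m + 2 := by linear_combination u1.2 + hn' - u2.2 + hn
    exact (by decide : ∀ x : ZMod 4, x ≠ x + 2) m this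

/-- A within-block pair never equals a pair meeting two distinct blocks. -/
lemma within_ne_cross {i a b : Fin t} {x y m n : ZMod 4} (hab : a ≠ b)
    (h : ({((i, x) : BVert t), (i, y)} : Finset (BVert t)) = {(a, m), (b, n)}) :
    False := by
  rcases fpair_eq.mp h with ⟨u1, u2⟩ | ⟨u1, u2⟩ <;> simp only [Prod.mk.injEq] at u1 u2
  · exact hab (u1.1.symm.trans u2.1)
  · exact hab (u2.1.symm.trans u1.1)

/-- Analysis of equality between two within-block pairs. -/
lemma within_within {i i' : Fin t} {x y x' y' : ZMod 4}
    (h : ({((i, x) : BVert t), (i, y)} : Finset (BVert t)) = {(i', x'), (i', y')}) :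
    i = i' ∧ ((x = x' ∧ y = y') ∨ (x = y' ∧ y = x')) := by
  rcases fpair_eq.mp h with ⟨u1, u2⟩ | ⟨u1, u2⟩ <;> simp only [Prod.mk.injEq] at u1 u2
  · exact ⟨u1.1, Or.inl ⟨u1.2, u2.2⟩⟩
  · exact ⟨u1.1, Or.inr ⟨u1.2, u2.2⟩⟩

lemma occ_iff {f : BEdges t} {v : BVert t} :
    Occupied (IncB t) (E2B t) (f, v) ↔ v ∈ f.val ∨
      (∃ i : Fin t,
        (f.val = {(i, 0), (i, 1)} ∧ v = (i, 2)) ∨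
        (f.val = {(i, 0), (i, 2)} ∧ v = (i, 3)) ∨
        (f.val = {(i, 1), (i, 3)} ∧ v = (i, 0)) ∨
        (f.val = {(i, 2), (i, 3)} ∧ v = (i, 1))) ∨
      (∃ i j : Fin t, ∃ k : ZMod 4, i ≠ j ∧
        ((f.val = {(i, k), (j, k + 1)} ∧ v = (j, k + 2)) ∨
         (f.val = {(i, k + 1), (j, k + 2)} ∧ v = (i, k + 3)))) := by
  constructor
  · rintro (h | ⟨e, he, hh⟩)
    · exact Or.inl (mem_IncB.mp h)
    · rcases mem_E2B.mp he with ⟨i, rfl | rfl⟩ | ⟨i, j, k, hij, rfl⟩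
      · refine Or.inr (Or.inl ⟨i, ?_⟩)
        rcases hh with h | h <;> rw [Prod.ext_iff] at h
        · exact Or.inl ⟨congrArg Subtype.val h.1.symm, h.2.symm⟩
        · exact Or.inr (Or.inl ⟨congrArg Subtype.val h.1.symm, h.2.symm⟩)
      · refine Or.inr (Or.inl ⟨i, ?_⟩)
        rcases hh with h | h <;> rw [Prod.ext_iff] at h
        · exact Or.inr (Or.inr (Or.inl ⟨congrArg Subtype.val h.1.symm, h.2.symm⟩))
        · exact Or.inr (Or.inr (Or.inr ⟨congrArg Subtype.val h.1.symm, h.2.symm⟩))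
      · refine Or.inr (Or.inr ⟨i, j, k, hij, ?_⟩)
        rcases hh with h | h <;> rw [Prod.ext_iff] at h
        · exact Or.inl ⟨congrArg Subtype.val h.1.symm, h.2.symm⟩
        · exact Or.inr ⟨congrArg Subtype.val h.1.symm, h.2.symm⟩
  · rintro (h | ⟨i, ⟨hf, rfl⟩ | ⟨hf, rfl⟩ | ⟨hf, rfl⟩ | ⟨hf, rfl⟩⟩ |
      ⟨i, j, k, hij, ⟨hf, rfl⟩ | ⟨hf, rfl⟩⟩)
    · exact Or.inl (mem_IncB.mpr h)
    · exact Or.inr ⟨wB1 i, mem_E2B.mpr (Or.inl ⟨i, Or.inl rfl⟩),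
        Or.inl (Prod.ext (Subtype.ext hf).symm rfl)⟩
    · exact Or.inr ⟨wB1 i, mem_E2B.mpr (Or.inl ⟨i, Or.inl rfl⟩),
        Or.inr (Prod.ext (Subtype.ext hf).symm rfl)⟩
    · exact Or.inr ⟨wB2 i, mem_E2B.mpr (Or.inl ⟨i, Or.inr rfl⟩),
        Or.inl (Prod.ext (Subtype.ext hf).symm rfl)⟩
    · exact Or.inr ⟨wB2 i, mem_E2B.mpr (Or.inl ⟨i, Or.inr rfl⟩),
        Or.inr (Prod.ext (Subtype.ext hf).symm rfl)⟩
    · exact Or.inr ⟨cB i j k, mem_E2B.mpr (Or.inr ⟨i, j, k, hij, rfl⟩),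
        Or.inl (Prod.ext (Subtype.ext hf).symm rfl)⟩
    · exact Or.inr ⟨cB i j k, mem_E2B.mpr (Or.inr ⟨i, j, k, hij, rfl⟩),
        Or.inr (Prod.ext (Subtype.ext hf).symm rfl)⟩

/-- Occupied columns of a cross row `{(a,m),(b,m+1)}`. -/
lemma occ_cross_row {f : BEdges t} {v : BVert t} {a b : Fin t} {m n : ZMod 4}
    (hab : a ≠ b) (hn : n = m + 1) (hf : f.val = {(a, m), (b, n)})
    (h : Occupied (IncB t) (E2B t) (f, v)) :
    v = (a, m) ∨ v = (b, n) ∨ v = (b, m + 2) ∨ v = (a, m + 2) := by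
  subst hn
  rcases occ_iff.mp h with hm | ⟨i, hc⟩ | ⟨a', b', m', hab', hc⟩
  · rw [hf, Finset.mem_insert, Finset.mem_singleton] at hm; tauto
  · rcases hc with ⟨h1, rfl⟩ | ⟨h1, rfl⟩ | ⟨h1, rfl⟩ | ⟨h1, rfl⟩ <;>
      exact (within_ne_cross hab (h1.symm.trans hf)).elim
  · rcases hc with ⟨h1, rfl⟩ | ⟨h1, rfl⟩
    · obtain ⟨ha, hb, hm⟩ := crossPair_eq rfl rfl (hf.symm.trans h1)
      refine Or.inr (Or.inr (Or.inl ?_))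
      rw [← hb, hm]
    · obtain ⟨ha, hb, hm⟩ := crossPair_eq rfl (by ring) (hf.symm.trans h1)
      refine Or.inr (Or.inr (Or.inr ?_))
      rw [← ha, hm]
      exact Prod.ext rfl (by ring)

lemma occ_w01 {f : BEdges t} {v : BVert t} {i : Fin t} (hf : f.val = {(i, 0), (i, 1)})
    (h : Occupied (IncB t) (E2B t) (f, v)) : v = (i, 0) ∨ v = (i, 1) ∨ v = (i, 2) := by
  rcases occ_iff.mp h with hm | ⟨i', hc⟩ | ⟨a, b, m, hab, hc⟩
  · rw [hf, Finset.mem_insert, Finset.mem_singleton] at hm; tauto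
  · rcases hc with ⟨h1, rfl⟩ | ⟨h1, rfl⟩ | ⟨h1, rfl⟩ | ⟨h1, rfl⟩ <;>
      obtain ⟨hi, hl⟩ := within_within (hf.symm.trans h1)
    · exact Or.inr (Or.inr (by rw [hi]))
    · exact absurd hl (by decide)
    · exact absurd hl (by decide)
    · exact absurd hl (by decide)
  · rcases hc with ⟨h1, rfl⟩ | ⟨h1, rfl⟩ <;>
      exact (within_ne_cross hab (hf.symm.trans h1)).elim

lemma occ_w02 {f : BEdges t} {v : BVert t} {i : Fin t} (hf : f.val = {(i, 0), (i, 2)})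
    (h : Occupied (IncB t) (E2B t) (f, v)) : v = (i, 0) ∨ v = (i, 2) ∨ v = (i, 3) := by
  rcases occ_iff.mp h with hm | ⟨i', hc⟩ | ⟨a, b, m, hab, hc⟩
  · rw [hf, Finset.mem_insert, Finset.mem_singleton] at hm; tauto
  · rcases hc with ⟨h1, rfl⟩ | ⟨h1, rfl⟩ | ⟨h1, rfl⟩ | ⟨h1, rfl⟩ <;>
      obtain ⟨hi, hl⟩ := within_within (hf.symm.trans h1)
    · exact absurd hl (by decide)
    · exact Or.inr (Or.inr (by rw [hi]))
    · exact absurd hl (by decide)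
    · exact absurd hl (by decide)
  · rcases hc with ⟨h1, rfl⟩ | ⟨h1, rfl⟩ <;>
      exact (within_ne_cross hab (hf.symm.trans h1)).elim

lemma occ_w13 {f : BEdges t} {v : BVert t} {i : Fin t} (hf : f.val = {(i, 1), (i, 3)})
    (h : Occupied (IncB t) (E2B t) (f, v)) : v = (i, 1) ∨ v = (i, 3) ∨ v = (i, 0) := by
  rcases occ_iff.mp h with hm | ⟨i', hc⟩ | ⟨a, b, m, hab, hc⟩
  · rw [hf, Finset.mem_insert, Finset.mem_singleton] at hm; tauto
  · rcases hc with ⟨h1, rfl⟩ | ⟨h1, rfl⟩ | ⟨h1, rfl⟩ | ⟨h1, rfl⟩ <;>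
      obtain ⟨hi, hl⟩ := within_within (hf.symm.trans h1)
    · exact absurd hl (by decide)
    · exact absurd hl (by decide)
    · exact Or.inr (Or.inr (by rw [hi]))
    · exact absurd hl (by decide)
  · rcases hc with ⟨h1, rfl⟩ | ⟨h1, rfl⟩ <;>
      exact (within_ne_cross hab (hf.symm.trans h1)).elim

lemma occ_w23 {f : BEdges t} {v : BVert t} {i : Fin t} (hf : f.val = {(i, 2), (i, 3)})
    (h : Occupied (IncB t) (E2B t) (f, v)) : v = (i, 2) ∨ v = (i, 3) ∨ v = (i, 1) := by
  rcases occ_iff.mp h with hm | ⟨i', hc⟩ | ⟨a, b, m, hab, hc⟩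
  · rw [hf, Finset.mem_insert, Finset.mem_singleton] at hm; tauto
  · rcases hc with ⟨h1, rfl⟩ | ⟨h1, rfl⟩ | ⟨h1, rfl⟩ | ⟨h1, rfl⟩ <;>
      obtain ⟨hi, hl⟩ := within_within (hf.symm.trans h1)
    · exact absurd hl (by decide)
    · exact absurd hl (by decide)
    · exact absurd hl (by decide)
    · exact Or.inr (Or.inr (by rw [hi]))
  · rcases hc with ⟨h1, rfl⟩ | ⟨h1, rfl⟩ <;>
      exact (within_ne_cross hab (hf.symm.trans h1)).elim

lemma occ_col0 {f : BEdges t} {i : Fin t}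
    (h : Occupied (IncB t) (E2B t) (f, (i, 0))) :
    (i, 0) ∈ f.val ∨ f.val = {(i, 1), (i, 3)} ∨
      (∃ a, a ≠ i ∧ f.val = {(a, 2), (i, 3)}) ∨
      (∃ b, i ≠ b ∧ f.val = {(i, 2), (b, 3)}) := by
  rcases occ_iff.mp h with hm | ⟨i', hc⟩ | ⟨a, b, m, hab, hc⟩
  · exact Or.inl hm
  · rcases hc with ⟨h1, hv⟩ | ⟨h1, hv⟩ | ⟨h1, hv⟩ | ⟨h1, hv⟩
    · exact absurd (show ((0 : ZMod 4) = 2) from congrArg Prod.snd hv) (by decide)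
    · exact absurd (show ((0 : ZMod 4) = 3) from congrArg Prod.snd hv) (by decide)
    · have hvf : i = i' := congrArg Prod.fst hv
      rw [← hvf] at h1
      exact Or.inr (Or.inl h1)
    · exact absurd (show ((0 : ZMod 4) = 1) from congrArg Prod.snd hv) (by decide)
  · rcases hc with ⟨h1, hv⟩ | ⟨h1, hv⟩
    · have hvf : i = b := congrArg Prod.fst hv
      have hvs : (0 : ZMod 4) = m + 2 := congrArg Prod.snd hv
      have hm2 : m = 2 := (by decide : ∀ x : ZMod 4, (0 : ZMod 4) = x + 2 → x = 2) m hvs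
      subst hm2
      rw [show ((2 : ZMod 4) + 1 = 3) by decide, ← hvf] at h1
      exact Or.inr (Or.inr (Or.inl ⟨a, fun hh => hab (hh.trans hvf), h1⟩))
    · have hvf : i = a := congrArg Prod.fst hv
      have hvs : (0 : ZMod 4) = m + 3 := congrArg Prod.snd hv
      have hm2 : m = 1 := (by decide : ∀ x : ZMod 4, (0 : ZMod 4) = x + 3 → x = 1) m hvs
      subst hm2
      rw [show ((1 : ZMod 4) + 1 = 2) by decide,
        show ((1 : ZMod 4) + 2 = 3) by decide, ← hvf] at h1
      exact Or.inr (Or.inr (Or.inr ⟨b, fun hh => hab (hvf.symm.trans hh), h1⟩))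

lemma occ_col1 {f : BEdges t} {i : Fin t}
    (h : Occupied (IncB t) (E2B t) (f, (i, 1))) :
    (i, 1) ∈ f.val ∨ f.val = {(i, 2), (i, 3)} ∨
      (∃ a, a ≠ i ∧ f.val = {(a, 3), (i, 0)}) ∨
      (∃ b, i ≠ b ∧ f.val = {(i, 3), (b, 0)}) := by
  rcases occ_iff.mp h with hm | ⟨i', hc⟩ | ⟨a, b, m, hab, hc⟩
  · exact Or.inl hm
  · rcases hc with ⟨h1, hv⟩ | ⟨h1, hv⟩ | ⟨h1, hv⟩ | ⟨h1, hv⟩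
    · exact absurd (show ((1 : ZMod 4) = 2) from congrArg Prod.snd hv) (by decide)
    · exact absurd (show ((1 : ZMod 4) = 3) from congrArg Prod.snd hv) (by decide)
    · exact absurd (show ((1 : ZMod 4) = 0) from congrArg Prod.snd hv) (by decide)
    · have hvf : i = i' := congrArg Prod.fst hv
      rw [← hvf] at h1
      exact Or.inr (Or.inl h1)
  · rcases hc with ⟨h1, hv⟩ | ⟨h1, hv⟩
    · have hvf : i = b := congrArg Prod.fst hv
      have hvs : (1 : ZMod 4) = m + 2 := congrArg Prod.snd hv
      have hm2 : m = 3 := (by decide : ∀ x : ZMod 4, (1 : ZMod 4) = x + 2 → x = 3) m hvs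
      subst hm2
      rw [show ((3 : ZMod 4) + 1 = 0) by decide, ← hvf] at h1
      exact Or.inr (Or.inr (Or.inl ⟨a, fun hh => hab (hh.trans hvf), h1⟩))
    · have hvf : i = a := congrArg Prod.fst hv
      have hvs : (1 : ZMod 4) = m + 3 := congrArg Prod.snd hv
      have hm2 : m = 2 := (by decide : ∀ x : ZMod 4, (1 : ZMod 4) = x + 3 → x = 2) m hvs
      subst hm2
      rw [show ((2 : ZMod 4) + 1 = 3) by decide,
        show ((2 : ZMod 4) + 2 = 0) by decide, ← hvf] at h1
      exact Or.inr (Or.inr (Or.inr ⟨b, fun hh => hab (hvf.symm.trans hh), h1⟩))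

lemma occ_col2 {f : BEdges t} {i : Fin t}
    (h : Occupied (IncB t) (E2B t) (f, (i, 2))) :
    (i, 2) ∈ f.val ∨ f.val = {(i, 0), (i, 1)} ∨
      (∃ a, a ≠ i ∧ f.val = {(a, 0), (i, 1)}) ∨
      (∃ b, i ≠ b ∧ f.val = {(i, 0), (b, 1)}) := by
  rcases occ_iff.mp h with hm | ⟨i', hc⟩ | ⟨a, b, m, hab, hc⟩
  · exact Or.inl hm
  · rcases hc with ⟨h1, hv⟩ | ⟨h1, hv⟩ | ⟨h1, hv⟩ | ⟨h1, hv⟩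
    · have hvf : i = i' := congrArg Prod.fst hv
      rw [← hvf] at h1
      exact Or.inr (Or.inl h1)
    · exact absurd (show ((2 : ZMod 4) = 3) from congrArg Prod.snd hv) (by decide)
    · exact absurd (show ((2 : ZMod 4) = 0) from congrArg Prod.snd hv) (by decide)
    · exact absurd (show ((2 : ZMod 4) = 1) from congrArg Prod.snd hv) (by decide)
  · rcases hc with ⟨h1, hv⟩ | ⟨h1, hv⟩
    · have hvf : i = b := congrArg Prod.fst hv
      have hvs : (2 : ZMod 4) = m + 2 := congrArg Prod.snd hv
      have hm2 : m = 0 := (by decide : ∀ x : ZMod 4, (2 : ZMod 4) = x + 2 → x = 0) m hvs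
      subst hm2
      rw [show ((0 : ZMod 4) + 1 = 1) by decide, ← hvf] at h1
      exact Or.inr (Or.inr (Or.inl ⟨a, fun hh => hab (hh.trans hvf), h1⟩))
    · have hvf : i = a := congrArg Prod.fst hv
      have hvs : (2 : ZMod 4) = m + 3 := congrArg Prod.snd hv
      have hm2 : m = 3 := (by decide : ∀ x : ZMod 4, (2 : ZMod 4) = x + 3 → x = 3) m hvs
      subst hm2
      rw [show ((3 : ZMod 4) + 1 = 0) by decide,
        show ((3 : ZMod 4) + 2 = 1) by decide, ← hvf] at h1
      exact Or.inr (Or.inr (Or.inr ⟨b, fun hh => hab (hvf.symm.trans hh), h1⟩))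

lemma occ_col3 {f : BEdges t} {i : Fin t}
    (h : Occupied (IncB t) (E2B t) (f, (i, 3))) :
    (i, 3) ∈ f.val ∨ f.val = {(i, 0), (i, 2)} ∨
      (∃ a, a ≠ i ∧ f.val = {(a, 1), (i, 2)}) ∨
      (∃ b, i ≠ b ∧ f.val = {(i, 1), (b, 2)}) := by
  rcases occ_iff.mp h with hm | ⟨i', hc⟩ | ⟨a, b, m, hab, hc⟩
  · exact Or.inl hm
  · rcases hc with ⟨h1, hv⟩ | ⟨h1, hv⟩ | ⟨h1, hv⟩ | ⟨h1, hv⟩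
    · exact absurd (show ((3 : ZMod 4) = 2) from congrArg Prod.snd hv) (by decide)
    · have hvf : i = i' := congrArg Prod.fst hv
      rw [← hvf] at h1
      exact Or.inr (Or.inl h1)
    · exact absurd (show ((3 : ZMod 4) = 0) from congrArg Prod.snd hv) (by decide)
    · exact absurd (show ((3 : ZMod 4) = 1) from congrArg Prod.snd hv) (by decide)
  · rcases hc with ⟨h1, hv⟩ | ⟨h1, hv⟩
    · have hvf : i = b := congrArg Prod.fst hv
      have hvs : (3 : ZMod 4) = m + 2 := congrArg Prod.snd hv
      have hm2 : m = 1 := (by decide : ∀ x : ZMod 4, (3 : ZMod 4) = x + 2 → x = 1) m hvs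
      subst hm2
      rw [show ((1 : ZMod 4) + 1 = 2) by decide, ← hvf] at h1
      exact Or.inr (Or.inr (Or.inl ⟨a, fun hh => hab (hh.trans hvf), h1⟩))
    · have hvf : i = a := congrArg Prod.fst hv
      have hvs : (3 : ZMod 4) = m + 3 := congrArg Prod.snd hv
      have hm2 : m = 0 := (by decide : ∀ x : ZMod 4, (3 : ZMod 4) = x + 3 → x = 0) m hvs
      subst hm2
      rw [show ((0 : ZMod 4) + 1 = 1) by decide,
        show ((0 : ZMod 4) + 2 = 2) by decide, ← hvf] at h1
      exact Or.inr (Or.inr (Or.inr ⟨b, fun hh => hab (hvf.symm.trans hh), h1⟩))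

lemma half_eq_cases {e f : TwoEdge (BEdges t) (BVert t)} (he : e ∈ E2B t)
    (hf : f ∈ E2B t) : (e.1 = f.1 → e = f) ∧ (e.2 = f.2 → e = f) ∧ e.1 ≠ f.2 := by
  rcases mem_E2B.mp he with ⟨i, rfl | rfl⟩ | ⟨i, j, k, hij, rfl⟩ <;>
    rcases mem_E2B.mp hf with ⟨i', rfl | rfl⟩ | ⟨i', j', k', hij', rfl⟩
  · refine ⟨?_, ?_, ?_⟩
    · intro h
      have hs : ({((i, 0) : BVert t), (i, 1)} : Finset (BVert t)) = {(i', 0), (i', 1)} :=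
        congrArg (fun x => x.1.val) h
      obtain ⟨rfl, -⟩ := within_within hs
      rfl
    · intro h
      have hs : ({((i, 0) : BVert t), (i, 2)} : Finset (BVert t)) = {(i', 0), (i', 2)} :=
        congrArg (fun x => x.1.val) h
      obtain ⟨rfl, -⟩ := within_within hs
      rfl
    · intro h
      have hs : ({((i, 0) : BVert t), (i, 1)} : Finset (BVert t)) = {(i', 0), (i', 2)} :=
        congrArg (fun x => x.1.val) h
      exact absurd (within_within hs).2 (by decide)
  · refine ⟨?_, ?_, ?_⟩
    · intro h
      have hs : ({((i, 0) : BVert t), (i, 1)} : Finset (BVert t)) = {(i', 1), (i', 3)} :=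
        congrArg (fun x => x.1.val) h
      exact absurd (within_within hs).2 (by decide)
    · intro h
      have hs : ({((i, 0) : BVert t), (i, 2)} : Finset (BVert t)) = {(i', 2), (i', 3)} :=
        congrArg (fun x => x.1.val) h
      exact absurd (within_within hs).2 (by decide)
    · intro h
      have hs : ({((i, 0) : BVert t), (i, 1)} : Finset (BVert t)) = {(i', 2), (i', 3)} :=
        congrArg (fun x => x.1.val) h
      exact absurd (within_within hs).2 (by decide)
  · refine ⟨?_, ?_, ?_⟩
    · intro h
      have hs : ({((i, 0) : BVert t), (i, 1)} : Finset (BVert t)) = {(i', k'), (j', k' + 1)} :=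
        congrArg (fun x => x.1.val) h
      exact (within_ne_cross hij' hs).elim
    · intro h
      have hs : ({((i, 0) : BVert t), (i, 2)} : Finset (BVert t)) = {(i', k' + 1), (j', k' + 2)} :=
        congrArg (fun x => x.1.val) h
      exact (within_ne_cross hij' hs).elim
    · intro h
      have hs : ({((i, 0) : BVert t), (i, 1)} : Finset (BVert t)) = {(i', k' + 1), (j', k' + 2)} :=
        congrArg (fun x => x.1.val) h
      exact (within_ne_cross hij' hs).elim
  · refine ⟨?_, ?_, ?_⟩
    · intro h
      have hs : ({((i, 1) : BVert t), (i, 3)} : Finset (BVert t)) = {(i', 0), (i', 1)} :=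
        congrArg (fun x => x.1.val) h
      exact absurd (within_within hs).2 (by decide)
    · intro h
      have hs : ({((i, 2) : BVert t), (i, 3)} : Finset (BVert t)) = {(i', 0), (i', 2)} :=
        congrArg (fun x => x.1.val) h
      exact absurd (within_within hs).2 (by decide)
    · intro h
      have hs : ({((i, 1) : BVert t), (i, 3)} : Finset (BVert t)) = {(i', 0), (i', 2)} :=
        congrArg (fun x => x.1.val) h
      exact absurd (within_within hs).2 (by decide)
  · refine ⟨?_, ?_, ?_⟩
    · intro h
      have hs : ({((i, 1) : BVert t), (i, 3)} : Finset (BVert t)) = {(i', 1), (i', 3)} :=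
        congrArg (fun x => x.1.val) h
      obtain ⟨rfl, -⟩ := within_within hs
      rfl
    · intro h
      have hs : ({((i, 2) : BVert t), (i, 3)} : Finset (BVert t)) = {(i', 2), (i', 3)} :=
        congrArg (fun x => x.1.val) h
      obtain ⟨rfl, -⟩ := within_within hs
      rfl
    · intro h
      have hs : ({((i, 1) : BVert t), (i, 3)} : Finset (BVert t)) = {(i', 2), (i', 3)} :=
        congrArg (fun x => x.1.val) h
      exact absurd (within_within hs).2 (by decide)
  · refine ⟨?_, ?_, ?_⟩
    · intro h
      have hs : ({((i, 1) : BVert t), (i, 3)} : Finset (BVert t)) = {(i', k'), (j', k' + 1)} :=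
        congrArg (fun x => x.1.val) h
      exact (within_ne_cross hij' hs).elim
    · intro h
      have hs : ({((i, 2) : BVert t), (i, 3)} : Finset (BVert t)) = {(i', k' + 1), (j', k' + 2)} :=
        congrArg (fun x => x.1.val) h
      exact (within_ne_cross hij' hs).elim
    · intro h
      have hs : ({((i, 1) : BVert t), (i, 3)} : Finset (BVert t)) = {(i', k' + 1), (j', k' + 2)} :=
        congrArg (fun x => x.1.val) h
      exact (within_ne_cross hij' hs).elim
  · refine ⟨?_, ?_, ?_⟩
    · intro h
      have hs : ({((i, k) : BVert t), (j, k + 1)} : Finset (BVert t)) = {(i', 0), (i', 1)} :=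
        congrArg (fun x => x.1.val) h
      exact (within_ne_cross hij hs.symm).elim
    · intro h
      have hs : ({((i, k + 1) : BVert t), (j, k + 2)} : Finset (BVert t)) = {(i', 0), (i', 2)} :=
        congrArg (fun x => x.1.val) h
      exact (within_ne_cross hij hs.symm).elim
    · intro h
      have hs : ({((i, k) : BVert t), (j, k + 1)} : Finset (BVert t)) = {(i', 0), (i', 2)} :=
        congrArg (fun x => x.1.val) h
      exact (within_ne_cross hij hs.symm).elim
  · refine ⟨?_, ?_, ?_⟩
    · intro h
      have hs : ({((i, k) : BVert t), (j, k + 1)} : Finset (BVert t)) = {(i', 1), (i', 3)} :=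
        congrArg (fun x => x.1.val) h
      exact (within_ne_cross hij hs.symm).elim
    · intro h
      have hs : ({((i, k + 1) : BVert t), (j, k + 2)} : Finset (BVert t)) = {(i', 2), (i', 3)} :=
        congrArg (fun x => x.1.val) h
      exact (within_ne_cross hij hs.symm).elim
    · intro h
      have hs : ({((i, k) : BVert t), (j, k + 1)} : Finset (BVert t)) = {(i', 2), (i', 3)} :=
        congrArg (fun x => x.1.val) h
      exact (within_ne_cross hij hs.symm).elim
  · refine ⟨?_, ?_, ?_⟩
    · intro h
      have hs : ({((i, k) : BVert t), (j, k + 1)} : Finset (BVert t)) = {(i', k'), (j', k' + 1)} :=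
        congrArg (fun x => x.1.val) h
      obtain ⟨rfl, rfl, rfl⟩ := crossPair_eq rfl rfl hs
      rfl
    · intro h
      have hs : ({((i, k + 1) : BVert t), (j, k + 2)} : Finset (BVert t)) = {(i', k' + 1), (j', k' + 2)} :=
        congrArg (fun x => x.1.val) h
      obtain ⟨rfl, rfl, hk⟩ := crossPair_eq (by ring) (by ring) hs
      have hkk : k = k' := by linear_combination hk
      subst hkk
      rfl
    · intro h
      have hs : ({((i, k) : BVert t), (j, k + 1)} : Finset (BVert t)) = {(i', k' + 1), (j', k' + 2)} :=
        congrArg (fun x => x.1.val) h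
      obtain ⟨hi, hj, hk⟩ := crossPair_eq rfl (by ring) hs
      have hcol : ((j, k + 2) : BVert t) = (i', k' + 3) := congrArg Prod.snd h
      have hji : j = i' := congrArg Prod.fst hcol
      exact hij (hi.trans hji.symm)

lemma wB1_inj {i i' : Fin t} (h : wB1 i = wB1 i') : i = i' := by
  have hs : ({((i, 0) : BVert t), (i, 1)} : Finset (BVert t)) = {(i', 0), (i', 1)} :=
    congrArg (fun e => e.1.1.val) h
  exact (within_within hs).1

lemma wB2_inj {i i' : Fin t} (h : wB2 i = wB2 i') : i = i' := by
  have hs : ({((i, 1) : BVert t), (i, 3)} : Finset (BVert t)) = {(i', 1), (i', 3)} :=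
    congrArg (fun e => e.1.1.val) h
  exact (within_within hs).1

lemma wB1_ne_wB2 {i i' : Fin t} : wB1 i ≠ wB2 i' := by
  intro h
  have hs : ({((i, 0) : BVert t), (i, 1)} : Finset (BVert t)) = {(i', 1), (i', 3)} :=
    congrArg (fun e => e.1.1.val) h
  exact absurd (within_within hs).2 (by decide)

lemma cB_inj {i j i' j' : Fin t} {k k' : ZMod 4} (h : cB i j k = cB i' j' k') :
    i = i' ∧ j = j' ∧ k = k' := by
  have hs : ({((i, k) : BVert t), (j, k + 1)} : Finset (BVert t)) = {(i', k'), (j', k' + 1)} :=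
    congrArg (fun e => e.1.1.val) h
  exact crossPair_eq rfl rfl hs

lemma wB_ne_cB {i a b : Fin t} {k : ZMod 4} (hab : a ≠ b) :
    wB1 i ≠ cB a b k ∧ wB2 i ≠ cB a b k := by
  constructor <;> intro h
  · have hs : ({((i, 0) : BVert t), (i, 1)} : Finset (BVert t)) = {(a, k), (b, k + 1)} :=
      congrArg (fun e => e.1.1.val) h
    exact within_ne_cross hab hs
  · have hs : ({((i, 1) : BVert t), (i, 3)} : Finset (BVert t)) = {(a, k), (b, k + 1)} :=
      congrArg (fun e => e.1.1.val) h
    exact within_ne_cross hab hs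

lemma E2B_card (ht : 1 ≤ t) : (E2B t).card = 4 * t ^ 2 - 2 * t := by
  have hW : (Finset.univ.biUnion fun i : Fin t =>
      ({wB1 i, wB2 i} : Finset (TwoEdge (BEdges t) (BVert t)))).card = 2 * t := by
    rw [Finset.card_biUnion]
    · rw [Finset.sum_congr rfl (fun i _ => Finset.card_pair wB1_ne_wB2)]
      simp [Finset.card_univ, mul_comm]
    · intro x _ y _ hxy
      simp only [Finset.disjoint_left, Finset.mem_insert, Finset.mem_singleton]
      rintro e (rfl | rfl) (h | h)
      · exact hxy (wB1_inj h)
      · exact wB1_ne_wB2 h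
      · exact wB1_ne_wB2 h.symm
      · exact hxy (wB2_inj h)
  have hC : ((Finset.univ.filter fun p : (Fin t × Fin t) × ZMod 4 => p.1.1 ≠ p.1.2).image
      fun p => cB p.1.1 p.1.2 p.2).card = 4 * (t * t) - 4 * t := by
    rw [Finset.card_image_of_injOn]
    · have hdiag : (Finset.univ.filter
          fun p : (Fin t × Fin t) × ZMod 4 => p.1.1 = p.1.2).card = 4 * t := by
        rw [show (Finset.univ.filter fun p : (Fin t × Fin t) × ZMod 4 => p.1.1 = p.1.2)
            = Finset.univ.image (fun q : Fin t × ZMod 4 => ((q.1, q.1), q.2)) from ?_]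
        · rw [Finset.card_image_of_injective _ ?inj]
          · simp [Finset.card_univ, mul_comm]
          case inj =>
            intro a b hab
            simp only [Prod.mk.injEq] at hab
            exact Prod.ext hab.1.1 hab.2
        · ext p
          simp only [Finset.mem_filter, Finset.mem_univ, true_and, Finset.mem_image]
          constructor
          · intro h
            exact ⟨(p.1.1, p.2), Prod.ext (Prod.ext rfl h) rfl⟩
          · rintro ⟨q, rfl⟩
            rfl
      have htot := Finset.card_filter_add_card_filter_not
        (s := (Finset.univ : Finset ((Fin t × Fin t) × ZMod 4)))
        (p := fun p => p.1.1 = p.1.2)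
      have huniv : (Finset.univ : Finset ((Fin t × Fin t) × ZMod 4)).card = 4 * (t * t) := by
        simp [Finset.card_univ]
        ring
      have hfe : (Finset.univ.filter fun p : (Fin t × Fin t) × ZMod 4 => p.1.1 ≠ p.1.2)
          = Finset.univ.filter fun p : (Fin t × Fin t) × ZMod 4 => ¬ p.1.1 = p.1.2 := rfl
      rw [hfe]
      omega
    · intro p hp q hq h
      simp only [Finset.coe_filter, Finset.mem_univ, true_and, Set.mem_setOf_eq] at hp hq
      obtain ⟨h1, h2, h3⟩ := cB_inj h
      exact Prod.ext (Prod.ext h1 h2) h3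
  have hdisj : Disjoint (Finset.univ.biUnion fun i : Fin t =>
      ({wB1 i, wB2 i} : Finset (TwoEdge (BEdges t) (BVert t))))
      ((Finset.univ.filter fun p : (Fin t × Fin t) × ZMod 4 => p.1.1 ≠ p.1.2).image
        fun p => cB p.1.1 p.1.2 p.2) := by
    simp only [Finset.disjoint_left, Finset.mem_biUnion, Finset.mem_insert,
      Finset.mem_singleton, Finset.mem_image, Finset.mem_filter, Finset.mem_univ, true_and]
    rintro e ⟨i, rfl | rfl⟩ ⟨p, hp, h⟩
    · exact (wB_ne_cB hp).1 h.symm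
    · exact (wB_ne_cB hp).2 h.symm
  rw [E2B, Finset.card_union_of_disjoint hdisj, hW, hC]
  have h1 : t ≤ t * t := Nat.le_mul_of_pos_left t ht
  have h2 : t ^ 2 = t * t := sq t
  omega

lemma BVert.fst_ne {i j : Fin t} {c d : ZMod 4} (h : i ≠ j) :
    (i, c) ≠ ((j, d) : BVert t) :=
  fun hEq => h (congrArg Prod.fst hEq)

lemma mem_IncB' {c : BEdges t × BVert t} : c ∈ IncB t ↔ c.2 ∈ c.1.val := by
  simp [IncB]

lemma not_mem_pair {a b c : BVert t} (h1 : c ≠ a) (h2 : c ≠ b) :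
    c ∉ ({a, b} : Finset (BVert t)) := by
  simp only [Finset.mem_insert, Finset.mem_singleton]
  tauto

end Helpers

/-- `E2` has exactly `4t² − 2t` elements, and `(E1,E2)` satisfies the
simplicity condition and contains no generalized `C₄`-cycle. -/
theorem K4t_maximal_admissible (t : ℕ) (ht : 1 ≤ t) :
    (E2B t).card = 4 * t ^ 2 - 2 * t ∧
    Simple (IncB t) (E2B t) ∧ ¬ HasGenC4 (IncB t) (E2B t) := by
  refine ⟨E2B_card ht, ⟨fun e he => (half_eq_cases he he).2.2, ?_, ?_⟩, ?_⟩
  · -- halves are not 1-edges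
    intro e he
    rcases mem_E2B.mp he with ⟨i, rfl | rfl⟩ | ⟨i, j, k, hij, rfl⟩
    · exact ⟨fun hm => not_mem_pair (BVert.snd_ne (by decide)) (BVert.snd_ne (by decide))
          (mem_IncB'.mp hm),
        fun hm => not_mem_pair (BVert.snd_ne (by decide)) (BVert.snd_ne (by decide))
          (mem_IncB'.mp hm)⟩
    · exact ⟨fun hm => not_mem_pair (BVert.snd_ne (by decide)) (BVert.snd_ne (by decide))
          (mem_IncB'.mp hm),
        fun hm => not_mem_pair (BVert.snd_ne (by decide)) (BVert.snd_ne (by decide))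
          (mem_IncB'.mp hm)⟩
    · refine ⟨fun hm => ?_, fun hm => ?_⟩
      · exact not_mem_pair (BVert.fst_ne (Ne.symm hij))
          (BVert.snd_ne ((by decide : ∀ x : ZMod 4, x + 2 ≠ x + 1) k)) (mem_IncB'.mp hm)
      · exact not_mem_pair (BVert.snd_ne ((by decide : ∀ x : ZMod 4, x + 3 ≠ x + 1) k))
          (BVert.fst_ne hij) (mem_IncB'.mp hm)
  · -- halves pairwise distinct
    intro e he f hf hef
    obtain ⟨a1, a2, a3⟩ := half_eq_cases he hf
    obtain ⟨b1, b2, b3⟩ := half_eq_cases hf he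
    exact ⟨fun h => hef (a1 h), a3, fun h => b3 h.symm, fun h => hef (a2 h)⟩
  · -- no generalized C4
    rintro (⟨r1, r2, c1, c2, hr, hc, h1, h2, h3, h4⟩ |
            ⟨e, he, hnd, ho1, ho2⟩ |
            ⟨e, he, r, v, hrne1, hrne2, hvne1, hvne2, hrv, hrc1, hrc2, he1v, he2v, -⟩)
    · -- (1): no C4 among 1-edges
      have e1 : r1.val = {c1, c2} := pair_mem_eq (mem_IncB'.mp h1) (mem_IncB'.mp h2) hc
      have e2 : r2.val = {c1, c2} := pair_mem_eq (mem_IncB'.mp h3) (mem_IncB'.mp h4) hc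
      exact hr (Subtype.ext (e1.trans e2.symm))
    · -- (2): an opposite cell of each 2-edge is unoccupied
      rcases mem_E2B.mp he with ⟨i, rfl | rfl⟩ | ⟨i, j, k, hij, rfl⟩
      · rcases occ_w01 (i := i) rfl ho1 with u | u | u <;>
          exact BVert.snd_ne (by decide) u
      · rcases occ_w23 (i := i) rfl ho2 with u | u | u <;>
          exact BVert.snd_ne (by decide) u
      · rcases occ_cross_row hij rfl rfl ho1 with u | u | u | u
        · exact (by decide : ∀ x : ZMod 4, ¬(x + 3 = x)) k (congrArg Prod.snd u)
        · exact hij (congrArg Prod.fst u)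
        · exact hij (congrArg Prod.fst u)
        · exact (by decide : ∀ x : ZMod 4, ¬(x + 3 = x + 2)) k (congrArg Prod.snd u)
    · -- (3): no hooked cell configuration
      rcases mem_E2B.mp he with ⟨i, rfl | rfl⟩ | ⟨i, j, k, hij, rfl⟩
      · -- e = wB1 i
        have hv0 : v = (i, 0) := by
          rcases occ_w01 (i := i) rfl he1v with u | u | u
          · rcases occ_w02 (i := i) rfl he2v with w | w | w
            · exact u
            · exact absurd (u.symm.trans w) (BVert.snd_ne (by decide))
            · exact absurd (u.symm.trans w) (BVert.snd_ne (by decide))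
          · rcases occ_w02 (i := i) rfl he2v with w | w | w <;>
              exact absurd (u.symm.trans w) (BVert.snd_ne (by decide))
          · exact absurd u hvne1
        subst hv0
        rcases occ_col0 hrv with m0 | hr0 | ⟨a, ha, hr0⟩ | ⟨b, hb, hr0⟩
        · rcases occ_col2 hrc1 with m2 | hr2 | ⟨a2, ha2, hr2⟩ | ⟨b2, hb2, hr2⟩
          · exact hrne2 (Subtype.ext (pair_mem_eq m0 m2 (BVert.snd_ne (by decide))))
          · exact hrne1 (Subtype.ext hr2)
          · rw [hr2] at m0
            rcases Finset.mem_insert.mp m0 with u | u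
            · exact ha2 (congrArg Prod.fst u).symm
            · exact BVert.snd_ne (by decide) (Finset.mem_singleton.mp u)
          · rcases occ_col3 hrc2 with m3 | hr3 | ⟨a3, ha3, hr3⟩ | ⟨b3, hb3, hr3⟩
            · rw [hr2] at m3
              rcases Finset.mem_insert.mp m3 with u | u
              · exact BVert.snd_ne (by decide) u
              · exact BVert.snd_ne (by decide) (Finset.mem_singleton.mp u)
            · rcases fpair_eq.mp (hr2.symm.trans hr3) with ⟨u1, u2⟩ | ⟨u1, u2⟩
              · exact BVert.snd_ne (by decide) u2
              · exact BVert.snd_ne (by decide) u1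
            · rcases fpair_eq.mp (hr2.symm.trans hr3) with ⟨u1, u2⟩ | ⟨u1, u2⟩
              · exact BVert.snd_ne (by decide) u1
              · exact BVert.snd_ne (by decide) u1
            · rcases fpair_eq.mp (hr2.symm.trans hr3) with ⟨u1, u2⟩ | ⟨u1, u2⟩
              · exact BVert.snd_ne (by decide) u1
              · exact BVert.snd_ne (by decide) u1
        · rcases occ_col2 hrc1 with m2 | hr2 | ⟨a2, ha2, hr2⟩ | ⟨b2, hb2, hr2⟩
          · rw [hr0] at m2
            rcases Finset.mem_insert.mp m2 with u | u
            · exact BVert.snd_ne (by decide) u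
            · exact BVert.snd_ne (by decide) (Finset.mem_singleton.mp u)
          · rcases fpair_eq.mp (hr0.symm.trans hr2) with ⟨u1, u2⟩ | ⟨u1, u2⟩
            · exact BVert.snd_ne (by decide) u1
            · exact BVert.snd_ne (by decide) u2
          · rcases fpair_eq.mp (hr0.symm.trans hr2) with ⟨u1, u2⟩ | ⟨u1, u2⟩
            · exact BVert.snd_ne (by decide) u1
            · exact BVert.snd_ne (by decide) u2
          · rcases fpair_eq.mp (hr0.symm.trans hr2) with ⟨u1, u2⟩ | ⟨u1, u2⟩
            · exact BVert.snd_ne (by decide) u1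
            · exact BVert.snd_ne (by decide) u2
        · rcases occ_col2 hrc1 with m2 | hr2 | ⟨a2, ha2, hr2⟩ | ⟨b2, hb2, hr2⟩
          · rw [hr0] at m2
            rcases Finset.mem_insert.mp m2 with u | u
            · exact ha (congrArg Prod.fst u).symm
            · exact BVert.snd_ne (by decide) (Finset.mem_singleton.mp u)
          · rcases fpair_eq.mp (hr0.symm.trans hr2) with ⟨u1, u2⟩ | ⟨u1, u2⟩ <;>
              exact BVert.snd_ne (by decide) u1
          · rcases fpair_eq.mp (hr0.symm.trans hr2) with ⟨u1, u2⟩ | ⟨u1, u2⟩ <;>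
              exact BVert.snd_ne (by decide) u1
          · rcases fpair_eq.mp (hr0.symm.trans hr2) with ⟨u1, u2⟩ | ⟨u1, u2⟩ <;>
              exact BVert.snd_ne (by decide) u1
        · rcases occ_col3 hrc2 with m3 | hr3 | ⟨a3, ha3, hr3⟩ | ⟨b3, hb3, hr3⟩
          · rw [hr0] at m3
            rcases Finset.mem_insert.mp m3 with u | u
            · exact BVert.snd_ne (by decide) u
            · exact hb (congrArg Prod.fst (Finset.mem_singleton.mp u))
          · rcases fpair_eq.mp (hr0.symm.trans hr3) with ⟨u1, u2⟩ | ⟨u1, u2⟩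
            · exact BVert.snd_ne (by decide) u1
            · exact BVert.snd_ne (by decide) u2
          · rcases fpair_eq.mp (hr0.symm.trans hr3) with ⟨u1, u2⟩ | ⟨u1, u2⟩
            · exact BVert.snd_ne (by decide) u1
            · exact BVert.snd_ne (by decide) u2
          · rcases fpair_eq.mp (hr0.symm.trans hr3) with ⟨u1, u2⟩ | ⟨u1, u2⟩
            · exact BVert.snd_ne (by decide) u1
            · exact BVert.snd_ne (by decide) u2
      · -- e = wB2 i
        have hv3 : v = (i, 3) := by
          rcases occ_w13 (i := i) rfl he1v with u | u | u
          · exact absurd u hvne2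
          · exact u
          · exact absurd u hvne1
        subst hv3
        rcases occ_col0 hrc1 with m0 | hr0 | ⟨a, ha, hr0⟩ | ⟨b, hb, hr0⟩
        · rcases occ_col1 hrc2 with m1 | hr1 | ⟨a1, ha1, hr1⟩ | ⟨b1, hb1, hr1⟩
          · have hr01 : r.val = {(i, 0), (i, 1)} :=
              pair_mem_eq m0 m1 (BVert.snd_ne (by decide))
            rcases occ_col3 hrv with m3 | hr3 | ⟨a3, ha3, hr3⟩ | ⟨b3, hb3, hr3⟩
            · rw [hr01] at m3
              rcases Finset.mem_insert.mp m3 with u | u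
              · exact BVert.snd_ne (by decide) u
              · exact BVert.snd_ne (by decide) (Finset.mem_singleton.mp u)
            · rcases fpair_eq.mp (hr01.symm.trans hr3) with ⟨u1, u2⟩ | ⟨u1, u2⟩
              · exact BVert.snd_ne (by decide) u2
              · exact BVert.snd_ne (by decide) u1
            · rcases fpair_eq.mp (hr01.symm.trans hr3) with ⟨u1, u2⟩ | ⟨u1, u2⟩
              · exact BVert.snd_ne (by decide) u1
              · exact BVert.snd_ne (by decide) u1
            · rcases fpair_eq.mp (hr01.symm.trans hr3) with ⟨u1, u2⟩ | ⟨u1, u2⟩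
              · exact BVert.snd_ne (by decide) u1
              · exact BVert.snd_ne (by decide) u1
          · exact hrne2 (Subtype.ext hr1)
          · rcases occ_col3 hrv with m3 | hr3 | ⟨a3, ha3, hr3⟩ | ⟨b3, hb3, hr3⟩
            · rw [hr1] at m3
              rcases Finset.mem_insert.mp m3 with u | u
              · exact ha1 (congrArg Prod.fst u).symm
              · exact BVert.snd_ne (by decide) (Finset.mem_singleton.mp u)
            · rcases fpair_eq.mp (hr1.symm.trans hr3) with ⟨u1, u2⟩ | ⟨u1, u2⟩ <;>
                exact BVert.snd_ne (by decide) u1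
            · rcases fpair_eq.mp (hr1.symm.trans hr3) with ⟨u1, u2⟩ | ⟨u1, u2⟩ <;>
                exact BVert.snd_ne (by decide) u1
            · rcases fpair_eq.mp (hr1.symm.trans hr3) with ⟨u1, u2⟩ | ⟨u1, u2⟩ <;>
                exact BVert.snd_ne (by decide) u1
          · rw [hr1] at m0
            rcases Finset.mem_insert.mp m0 with u | u
            · exact BVert.snd_ne (by decide) u
            · exact hb1 (congrArg Prod.fst (Finset.mem_singleton.mp u))
        · exact hrne1 (Subtype.ext hr0)
        · rcases occ_col1 hrc2 with m1 | hr1 | ⟨a1, ha1, hr1⟩ | ⟨b1, hb1, hr1⟩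
          · rw [hr0] at m1
            rcases Finset.mem_insert.mp m1 with u | u
            · exact BVert.snd_ne (by decide) u
            · exact BVert.snd_ne (by decide) (Finset.mem_singleton.mp u)
          · rcases fpair_eq.mp (hr0.symm.trans hr1) with ⟨u1, u2⟩ | ⟨u1, u2⟩
            · exact ha (congrArg Prod.fst u1)
            · exact BVert.snd_ne (by decide) u1
          · rcases fpair_eq.mp (hr0.symm.trans hr1) with ⟨u1, u2⟩ | ⟨u1, u2⟩ <;>
              exact BVert.snd_ne (by decide) u1
          · rcases fpair_eq.mp (hr0.symm.trans hr1) with ⟨u1, u2⟩ | ⟨u1, u2⟩ <;>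
              exact BVert.snd_ne (by decide) u1
        · rcases occ_col1 hrc2 with m1 | hr1 | ⟨a1, ha1, hr1⟩ | ⟨b1, hb1, hr1⟩
          · rw [hr0] at m1
            rcases Finset.mem_insert.mp m1 with u | u
            · exact BVert.snd_ne (by decide) u
            · exact BVert.snd_ne (by decide) (Finset.mem_singleton.mp u)
          · rcases fpair_eq.mp (hr0.symm.trans hr1) with ⟨u1, u2⟩ | ⟨u1, u2⟩
            · exact hb (congrArg Prod.fst u2).symm
            · exact BVert.snd_ne (by decide) u1
          · rcases fpair_eq.mp (hr0.symm.trans hr1) with ⟨u1, u2⟩ | ⟨u1, u2⟩ <;>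
              exact BVert.snd_ne (by decide) u1
          · rcases fpair_eq.mp (hr0.symm.trans hr1) with ⟨u1, u2⟩ | ⟨u1, u2⟩ <;>
              exact BVert.snd_ne (by decide) u1
      · -- e = cB i j k
        rcases occ_cross_row hij rfl rfl he1v with rfl | rfl | rfl | rfl
        · rcases occ_cross_row hij (by ring) rfl he2v with w | w | w | w
          · exact (by decide : ∀ x : ZMod 4, ¬(x = x + 1)) k (congrArg Prod.snd w)
          · exact hij (congrArg Prod.fst w)
          · exact hij (congrArg Prod.fst w)
          · exact (by decide : ∀ x : ZMod 4, ¬(x = x + 1 + 2)) k (congrArg Prod.snd w)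
        · rcases occ_cross_row hij (by ring) rfl he2v with w | w | w | w
          · exact hij (congrArg Prod.fst w).symm
          · exact (by decide : ∀ x : ZMod 4, ¬(x + 1 = x + 2)) k (congrArg Prod.snd w)
          · exact (by decide : ∀ x : ZMod 4, ¬(x + 1 = x + 1 + 2)) k (congrArg Prod.snd w)
          · exact hij (congrArg Prod.fst w).symm
        · exact hvne1 rfl
        · rcases occ_cross_row hij (by ring) rfl he2v with w | w | w | w
          · exact (by decide : ∀ x : ZMod 4, ¬(x + 2 = x + 1)) k (congrArg Prod.snd w)
          · exact hij (congrArg Prod.fst w)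
          · exact hij (congrArg Prod.fst w)
          · exact (by decide : ∀ x : ZMod 4, ¬(x + 2 = x + 1 + 2)) k (congrArg Prod.snd w)
end

section
/- Let E1 = {(1,1),(1,2),(1,3),(2,1),(2,4),(3,2),(3,4),(3,5),(4,3),(4,5),(5,1),(5,5)} ⊆ [5]×[5] and E2 = {(1,4;5,2), (2,3;4,2)}. Then E1 is C4-free with |E1| = 12, the pair (E1,E2) satisfies the simplicity condition, and (E1,E2) contains no generalized C4-cycle. -/
open Finset

/-- The extremal `C₄`-free graph of Type I on `[5] × [5]` (cells written 0-indexed):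
`{(1,1),(1,2),(1,3),(2,1),(2,4),(3,2),(3,4),(3,5),(4,3),(4,5),(5,1),(5,5)}`. -/
def E1i : Finset (Fin 5 × Fin 5) :=
  {(0, 0), (0, 1), (0, 2), (1, 0), (1, 3), (2, 1), (2, 3), (2, 4), (3, 2), (3, 4),
    (4, 0), (4, 4)}

/-- The two 2-edges `(1,4;5,2)` and `(2,3;4,2)` (written 0-indexed). -/
def E2i : Finset (TwoEdge (Fin 5) (Fin 5)) :=
  {((0, 3), (4, 1)), ((1, 2), (3, 1))}

set_option maxHeartbeats 4000000 in
set_option synthInstance.maxHeartbeats 1000000 in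
set_option synthInstance.maxSize 4096 in
set_option maxRecDepth 10000 in
/-- `E1` is `C₄`-free with `|E1| = 12`, `(E1,E2)` satisfies the simplicity
condition and contains no generalized `C₄`-cycle. -/
theorem five_five_typeI_admissible :
    C4Free E1i ∧ E1i.card = 12 ∧ Simple E1i E2i ∧ ¬ HasGenC4 E1i E2i := by
  refine ⟨?_, ?_, ?_, ?_⟩
  · unfold C4Free E1i; decide
  · decide
  · unfold Simple
    refine ⟨?_, ?_, ?_⟩
    · intro e he
      fin_cases he <;> decide
    · intro e he
      fin_cases he <;> constructor <;> (unfold E1i; decide)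
    · intro e he f hf
      fin_cases he <;> fin_cases hf <;> decide
  · unfold HasGenC4
    push_neg
    refine ⟨?_, ?_, ?_⟩
    · unfold E1i; decide
    · unfold Nondeg Occupied E1i E2i; decide
    · unfold Nondeg Occupied E1i E2i; decide
end

section
/- The limited augmented Zarankiewicz number satisfies z_L(6,3) ≥ 10. -/
open Finset

set_option maxRecDepth 100000

lemma zar_upper (E1 : Finset (Fin 6 × Fin 3)) (h : C4Free E1) : E1.card ≤ 9 := by
  classical
  set row : Fin 6 → Finset (Fin 3) := fun i => (E1.filter (fun c => c.1 = i)).image Prod.snd with hrow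
  set P : Fin 6 → Finset (Fin 3 × Fin 3) := fun i => ((row i) ×ˢ (row i)).filter (fun p => p.1 < p.2) with hP
  have hmem : ∀ i j, j ∈ row i ↔ (i, j) ∈ E1 := by
    intro i j
    simp only [hrow, mem_image, mem_filter]
    constructor
    · rintro ⟨⟨a,b⟩, ⟨hc, rfl⟩, rfl⟩; exact hc
    · intro hc; exact ⟨(i,j), ⟨hc, rfl⟩, rfl⟩
  have hcardrow : E1.card = ∑ i : Fin 6, (row i).card := by
    rw [Finset.card_eq_sum_card_fiberwise (f := Prod.fst) (t := univ) (fun x _ => mem_univ _)]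
    refine Finset.sum_congr rfl (fun i _ => ?_)
    rw [hrow]
    refine (Finset.card_image_of_injOn ?_).symm
    rintro ⟨a,b⟩ ha ⟨c,d⟩ hc hbd
    simp only [mem_filter, mem_coe] at ha hc
    simp only [Prod.mk.injEq] at *
    exact ⟨ha.2.trans hc.2.symm, hbd⟩
  have hsmall : ∀ s : Finset (Fin 3), s.card ≤ ((s ×ˢ s).filter (fun p => p.1 < p.2)).card + 1 := by decide
  have hdisj : ∀ i k : Fin 6, i ≠ k → Disjoint (P i) (P k) := by
    intro i k hik
    rw [Finset.disjoint_left]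
    rintro ⟨j, l⟩ hi hk
    simp only [hP, mem_filter, mem_product, hmem] at hi hk
    exact h i k j l hik (ne_of_lt hi.2) hi.1.1 hi.1.2 hk.1.1 hk.1.2
  have hsum : ∑ i : Fin 6, (P i).card ≤ 3 := by
    rw [← Finset.card_biUnion (fun i _ => fun k _ hik => hdisj i k hik)]
    calc (Finset.univ.biUnion P).card ≤ ((univ : Finset (Fin 3 × Fin 3)).filter (fun p => p.1 < p.2)).card := by
          apply Finset.card_le_card
          intro p hp
          simp only [mem_biUnion] at hp
          obtain ⟨i, _, hi⟩ := hp
          simp only [hP, mem_filter] at hi ⊢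
          exact ⟨mem_univ _, hi.2⟩
      _ = 3 := by decide
  calc E1.card = ∑ i : Fin 6, (row i).card := hcardrow
    _ ≤ ∑ i : Fin 6, ((P i).card + 1) := Finset.sum_le_sum (fun i _ => hsmall (row i))
    _ = (∑ i : Fin 6, (P i).card) + 6 := by rw [Finset.sum_add_distrib]; simp
    _ ≤ 9 := by omega

def E1w : Finset (Fin 6 × Fin 3) :=
  {(0,0),(0,1),(1,0),(1,2),(2,1),(2,2),(3,0),(4,1),(5,2)}

def E2w : Finset (TwoEdge (Fin 6) (Fin 3)) := {((3,1),(3,2))}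

lemma zar_63 : zar 6 3 = 9 := by
  have hbdd : ∀ k ∈ {k | ∃ E1 : Finset (Fin 6 × Fin 3), C4Free E1 ∧ E1.card = k}, k ≤ 9 := by
    rintro k ⟨E1, hE1, rfl⟩; exact zar_upper E1 hE1
  have hmem : (9 : ℕ) ∈ {k | ∃ E1 : Finset (Fin 6 × Fin 3), C4Free E1 ∧ E1.card = k} :=
    ⟨E1w, by unfold C4Free E1w; decide, by decide⟩
  exact le_antisymm (csSup_le ⟨9, hmem⟩ hbdd) (le_csSup ⟨9, hbdd⟩ hmem)

/-- `z_L(6,3) ≥ 10`. -/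
theorem zL_six_three : 10 ≤ zL 6 3 := by
  have hbdd : BddAbove {k | ∃ (E1 : Finset (Fin 6 × Fin 3)) (E2 : Finset (TwoEdge (Fin 6) (Fin 3))),
      Admissible E1 E2 ∧ E1.card + E2.card = k} := by
    refine ⟨18 + 324, ?_⟩
    rintro k ⟨E1, E2, _, rfl⟩
    have h1 : E1.card ≤ 18 := le_trans (Finset.card_le_univ E1) (by simp)
    have h2 : E2.card ≤ 324 := le_trans (Finset.card_le_univ E2) (by simp [TwoEdge])
    omega
  refine le_csSup hbdd ⟨E1w, E2w, ⟨?_, ?_, ?_, ?_⟩, by decide⟩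
  · unfold C4Free E1w; decide
  · rw [zar_63]; decide
  · unfold Simple E1w E2w
    refine ⟨?_, ?_, ?_⟩ <;> decide
  · unfold HasGenC4 Occupied Nondeg E1w E2w
    rintro (h | h | h)
    · revert h; decide
    · revert h; decide
    · obtain ⟨e, he, k, l, hk1, hk2, hl1, hl2, o1, o2, o3, o4, o5, -⟩ := h
      simp only [Finset.mem_singleton] at he
      subst he
      revert hk1 hk2 hl1 hl2 o1 o2 o3 o4 o5
      revert k l
      decide
end

section
/- The limited augmented Zarankiewicz numbers satisfy z_L(6,5) ≥ 17 and z_L(6,6) ≥ 19. -/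
open Finset

section AuxZL

instance {α β : Type*} [DecidableEq α] [DecidableEq β] (E1 : Finset (α × β))
    (E2 : Finset (TwoEdge α β)) (c : α × β) : Decidable (Occupied E1 E2 c) := by
  unfold Occupied; infer_instance

instance {α β : Type*} [DecidableEq α] [DecidableEq β] (e : TwoEdge α β) :
    Decidable (Nondeg e) := by
  unfold Nondeg; infer_instance

instance {α β : Type*} [Fintype α] [Fintype β] [DecidableEq α] [DecidableEq β]
    (E1 : Finset (α × β)) : Decidable (C4Free E1) := by
  unfold C4Free; infer_instance

instance {α β : Type*} [DecidableEq α] [DecidableEq β] (E1 : Finset (α × β))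
    (E2 : Finset (TwoEdge α β)) : Decidable (Simple E1 E2) := by
  unfold Simple; infer_instance

set_option synthInstance.maxHeartbeats 1000000 in
set_option synthInstance.maxSize 2048 in
instance {α β : Type*} [Fintype α] [Fintype β] [DecidableEq α] [DecidableEq β]
    (E1 : Finset (α × β)) (E2 : Finset (TwoEdge α β)) : Decidable (HasGenC4 E1 E2) := by
  unfold HasGenC4; infer_instance

lemma aux_quad (d : ℕ) : 4 * d ≤ d * d - d + 6 := by
  rcases Nat.lt_or_ge d 5 with h | h
  · interval_cases d <;> norm_num
  · have h2 : 5 * d ≤ d * d := Nat.mul_le_mul_right d h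
    have h3 : d ≤ d * d := Nat.le_mul_of_pos_left d (by omega)
    omega

lemma c4free_card_bound {m n : ℕ} (E1 : Finset (Fin m × Fin n)) (h : C4Free E1) :
    4 * E1.card ≤ n * n - n + 6 * m := by
  classical
  set R : Fin m → Finset (Fin n) := fun i => univ.filter fun j => (i, j) ∈ E1 with hR
  have hmemR : ∀ i j, j ∈ R i ↔ (i, j) ∈ E1 := by
    intro i j; simp [hR]
  have hcard : E1.card = ∑ i : Fin m, (R i).card := by
    rw [Finset.card_eq_sum_card_fiberwise (f := Prod.fst) (t := univ)
      (fun x _ => mem_univ _)]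
    refine Finset.sum_congr rfl fun i _ => ?_
    refine Finset.card_bij (fun x _ => x.2) ?_ ?_ ?_
    · rintro ⟨a, b⟩ hab
      simp only [Finset.mem_filter] at hab
      rw [hmemR]
      obtain ⟨h1, h2⟩ := hab
      simpa [h2] using h1
    · rintro ⟨a, b⟩ ha ⟨c, d⟩ hc hbd
      simp only [Finset.mem_filter] at ha hc
      simp only [Prod.mk.injEq] at *
      exact ⟨ha.2.trans hc.2.symm, hbd⟩
    · intro b hb
      rw [hmemR] at hb
      exact ⟨(i, b), by simp [hb], rfl⟩
  have hdisj : ∀ i ∈ (univ : Finset (Fin m)), ∀ k ∈ (univ : Finset (Fin m)), i ≠ k →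
      Disjoint ((R i).offDiag) ((R k).offDiag) := by
    intro i _ k _ hik
    rw [Finset.disjoint_left]
    rintro ⟨j, l⟩ hj hk
    rw [Finset.mem_offDiag] at hj hk
    exact h i k j l hik hj.2.2 ((hmemR i j).mp hj.1) ((hmemR i l).mp hj.2.1)
      ((hmemR k j).mp hk.1) ((hmemR k l).mp hk.2.1)
  have hsum : ∑ i : Fin m, ((R i).offDiag).card
      = (univ.biUnion fun i => (R i).offDiag).card := (Finset.card_biUnion hdisj).symm
  have hle : (univ.biUnion fun i => (R i).offDiag).card
      ≤ ((univ : Finset (Fin n)).offDiag).card := by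
    refine Finset.card_le_card ?_
    intro x hx
    rw [Finset.mem_biUnion] at hx
    obtain ⟨i, _, hx⟩ := hx
    rw [Finset.mem_offDiag] at hx ⊢
    exact ⟨mem_univ _, mem_univ _, hx.2.2⟩
  have hoff : ((univ : Finset (Fin n)).offDiag).card = n * n - n := by
    rw [Finset.offDiag_card]; simp
  calc 4 * E1.card = ∑ i : Fin m, 4 * (R i).card := by rw [hcard, Finset.mul_sum]
    _ ≤ ∑ i : Fin m, (((R i).offDiag).card + 6) := by
        refine Finset.sum_le_sum fun i _ => ?_
        rw [Finset.offDiag_card]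
        exact aux_quad _
    _ = (∑ i : Fin m, ((R i).offDiag).card) + 6 * m := by
        rw [Finset.sum_add_distrib]
        simp [mul_comm]
    _ ≤ n * n - n + 6 * m := by
        rw [hsum]
        omega
        
def A65 : Finset (Fin 6 × Fin 5) :=
  {(0,0),(0,1),(0,2),(1,0),(1,3),(1,4),(2,1),(2,3),(3,1),(3,4),(4,2),(4,3),(5,2),(5,4)}

def B65 : Finset (TwoEdge (Fin 6) (Fin 5)) :=
  {((0,3),(3,2)),((1,1),(4,4)),((2,0),(5,0))}

def A66 : Finset (Fin 6 × Fin 6) :=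
  {(0,0),(0,1),(0,2),(1,0),(1,3),(1,4),(2,1),(2,3),(2,5),(3,2),(3,4),(3,5),(4,0),(4,5),(5,1),(5,4)}

def B66 : Finset (TwoEdge (Fin 6) (Fin 6)) :=
  {((0,3),(4,2)),((0,4),(2,2)),((1,1),(5,5))}

lemma zar65 : zar 6 5 = 14 := by
  unfold zar
  apply le_antisymm
  · apply csSup_le ⟨0, Set.mem_setOf.mpr ⟨∅, fun i k j l _ _ h => by simp at h, rfl⟩⟩
    rintro k ⟨E1, hE1, rfl⟩
    have := c4free_card_bound E1 hE1
    omega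
  · refine le_csSup ⟨14, ?_⟩ (Set.mem_setOf.mpr ⟨A65, by decide, by decide⟩)
    rintro k ⟨E1, hE1, rfl⟩
    have := c4free_card_bound E1 hE1
    omega

lemma zar66 : zar 6 6 = 16 := by
  unfold zar
  apply le_antisymm
  · apply csSup_le ⟨0, Set.mem_setOf.mpr ⟨∅, fun i k j l _ _ h => by simp at h, rfl⟩⟩
    rintro k ⟨E1, hE1, rfl⟩
    have := c4free_card_bound E1 hE1
    omega
  · refine le_csSup ⟨16, ?_⟩ (Set.mem_setOf.mpr ⟨A66, by decide, by decide⟩)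
    rintro k ⟨E1, hE1, rfl⟩
    have := c4free_card_bound E1 hE1
    omega

end AuxZL

/-- `z_L(6,5) ≥ 17` and `z_L(6,6) ≥ 19`. -/
theorem zL_six_five_and_six_six : 17 ≤ zL 6 5 ∧ 19 ≤ zL 6 6 := by
  constructor
  · unfold zL
    refine le_csSup ⟨930, ?_⟩ (Set.mem_setOf.mpr ⟨A65, B65, ⟨by decide, by rw [zar65]; decide, by decide, by decide⟩, by decide⟩)
    rintro k ⟨E1, E2, _, rfl⟩
    have h1 : E1.card ≤ 30 := le_trans (Finset.card_le_univ _) (by simp)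
    have h2 : E2.card ≤ 900 := le_trans (Finset.card_le_univ _) (by simp)
    omega
  · unfold zL
    refine le_csSup ⟨1332, ?_⟩ (Set.mem_setOf.mpr ⟨A66, B66, ⟨by decide, by rw [zar66]; decide, by decide, by decide⟩, by decide⟩)
    rintro k ⟨E1, E2, _, rfl⟩
    have h1 : E1.card ≤ 36 := le_trans (Finset.card_le_univ _) (by simp)
    have h2 : E2.card ≤ 1296 := le_trans (Finset.card_le_univ _) (by simp)
    omega
end
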